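/- The four vector fields P₀ = ∂_t, D₁ = t∂_t + (1/3)x∂_x − (1/3)w∂_w, P₁ = ∂_x, B = t∂_x − (2/3)x∂_w, together with U(ℓ) = ℓ(t)∂_w for smooth ℓ, close into a Lie algebra: in particular [P₀, D₁] = P₀, [P₀, B] = P₁, [D₁, P₁] = −(1/3)P₁, [D₁, B] = (2/3)B, [P₁, B] = −(2/3)U(1), and [D₁, U(ℓ)] = U(tℓ′ + (1/3)ℓ). -/

import Mathlib

/-!  **Statement 18.**  Point symmetries of the once-differentiated KdV
equation (the `y`-translation reduction of the potential KP symmetry algebra):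
vector fields on `ℝ³` with coordinates `(x, t, w) = (p 0, p 1, p 2)`:
`P₀ = ∂_t`, `D₁ = t∂_t + (1/3)x∂_x − (1/3)w∂_w`, `P₁ = ∂_x`,
`B = t∂_x − (2/3)x∂_w`, `U(ℓ) = ℓ(t)∂_w`, closing into a Lie algebra with
`[P₀, D₁] = P₀`, `[P₀, B] = P₁`, `[D₁, P₁] = −(1/3)P₁`, `[D₁, B] = (2/3)B`,
`[P₁, B] = −(2/3)U(1)`, `[D₁, U(ℓ)] = U(tℓ′ + (1/3)ℓ)`. -/

noncomputable section

abbrev E3 := Fin 3 → ℝ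

/-- Commutator of vector fields on `ℝ³`. -/
def vbracket3 (V W : E3 → E3) : E3 → E3 :=
  fun p => fderiv ℝ W p (V p) - fderiv ℝ V p (W p)

def P0 : E3 → E3 := fun _ => ![0, 1, 0]
def D1 : E3 → E3 := fun p => ![(1/3) * p 0, p 1, -(1/3) * p 2]
def P1 : E3 → E3 := fun _ => ![1, 0, 0]
def Bg : E3 → E3 := fun p => ![p 1, 0, -(2/3) * p 0]
def Uvf (l : ℝ → ℝ) : E3 → E3 := fun p => ![0, 0, l (p 1)]


def pr3 (i : Fin 3) : E3 →L[ℝ] ℝ := ContinuousLinearMap.proj i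

def D1' : E3 →L[ℝ] E3 :=
  ContinuousLinearMap.pi ![(1/3:ℝ) • pr3 0, pr3 1, (-(1/3):ℝ) • pr3 2]

def Bg' : E3 →L[ℝ] E3 :=
  ContinuousLinearMap.pi ![pr3 1, 0, (-(2/3):ℝ) • pr3 0]

lemma hasD1 (p : E3) : HasFDerivAt D1 D1' p := by
  have : D1 = ⇑D1' := by
    funext q; ext i; fin_cases i <;>
      simp [D1, D1', pr3, ContinuousLinearMap.pi_apply]
  rw [this]; exact D1'.hasFDerivAt

lemma hasBg (p : E3) : HasFDerivAt Bg Bg' p := by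
  have : Bg = ⇑Bg' := by
    funext q; ext i; fin_cases i <;>
      simp [Bg, Bg', pr3, ContinuousLinearMap.pi_apply]
  rw [this]; exact Bg'.hasFDerivAt

lemma hasU (l : ℝ → ℝ) (hl : ContDiff ℝ (⊤ : ℕ∞) l) (p : E3) :
    HasFDerivAt (Uvf l) (ContinuousLinearMap.pi ![0, 0, deriv l (p 1) • pr3 1]) p := by
  rw [hasFDerivAt_pi']
  intro i
  fin_cases i <;> simp [Uvf, ContinuousLinearMap.proj_pi]
  · exact hasFDerivAt_const _ _
  · exact hasFDerivAt_const _ _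
  · have h1 : HasFDerivAt (fun x : E3 => x 1) (pr3 1) p := (pr3 1).hasFDerivAt
    have h2 : HasDerivAt l (deriv l (p 1)) (p 1) :=
      ((hl.differentiable (by simp)) (p 1)).hasDerivAt
    exact h2.comp_hasFDerivAt p h1

/-- The stated commutation relations hold. -/
theorem kdv_symmetry_algebra (l : ℝ → ℝ) (hl : ContDiff ℝ (⊤ : ℕ∞) l) :
    vbracket3 P0 D1 = P0 ∧
    vbracket3 P0 Bg = P1 ∧
    vbracket3 D1 P1 = (fun p => (-(1:ℝ)/3) • P1 p) ∧
    vbracket3 D1 Bg = (fun p => ((2:ℝ)/3) • Bg p) ∧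
    vbracket3 P1 Bg = (fun p => (-(2:ℝ)/3) • Uvf (fun _ => 1) p) ∧
    vbracket3 D1 (Uvf l) = Uvf (fun t => t * deriv l t + (1/3) * l t) := by
  have hP0 : ∀ p : E3, fderiv ℝ P0 p = 0 := fun p => fderiv_const_apply _
  have hP1 : ∀ p : E3, fderiv ℝ P1 p = 0 := fun p => fderiv_const_apply _
  have hD1 : ∀ p : E3, fderiv ℝ D1 p = D1' := fun p => (hasD1 p).fderiv
  have hBg : ∀ p : E3, fderiv ℝ Bg p = Bg' := fun p => (hasBg p).fderiv
  have hU : ∀ p : E3, fderiv ℝ (Uvf l) p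
      = ContinuousLinearMap.pi ![0, 0, deriv l (p 1) • pr3 1] :=
    fun p => (hasU l hl p).fderiv
  refine ⟨?_, ?_, ?_, ?_, ?_, ?_⟩ <;>
    · funext p
      simp only [vbracket3, hP0, hP1, hD1, hBg, hU]
      ext i
      fin_cases i <;>
        simp [D1', Bg', pr3, P0, P1, D1, Bg, Uvf,
          ContinuousLinearMap.pi_apply] <;> ring


end
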